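/- arXiv:1608.04833 — 2 statements merged into one kernel-verified Lean document; each statement's English description precedes it below -/
import Mathlib

section
/- Let N ≥ 3 be an integer, Δx, Δt > 0 and ω ∈ ℝ. Let u, U : ℤ/Nℤ → ℝ be grid functions on the periodic lattice, set ū = (u + U)/2 and w = (U − u)/Δt, and suppose that for every n ∈ ℤ/Nℤ the scheme equation δ̃_x² w(n) + (δ̃_x² ū(n)) (δ_x ū(n)) + δ_x ( ū · δ̃_x² ū )(n) − 2ω δ_x ū(n) = 0 holds, where (ū · δ̃_x² ū)(m) := ū(m) δ̃_x² ū(m). Then Σ_{n ∈ ℤ/Nℤ} Δx (δ_x^+ U(n))² / 2 = Σ_{n ∈ ℤ/Nℤ} Δx (δ_x^+ u(n))² / 2. -/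
/-!
Write `v = (u + U)/2` and `w = (U - u)/Δt`. Then `(δ_x^+ U)² - (δ_x^+ u)² = 2 Δt δ_x^+ v δ_x^+ w`
pointwise, and summation by parts turns the change of the Hamiltonian into `-Δx Δt Σ v δ̃_x² w`.
Substituting the scheme for `δ̃_x² w`, what remains vanishes because the centered difference is
skew-adjoint on the periodic lattice: `Σ v δ_x v = 0`, and the two cubic terms
`Σ v (δ̃_x² v)(δ_x v)` and `Σ v δ_x (v δ̃_x² v)` cancel each other.
-/

/-- Forward difference on the periodic lattice. -/
noncomputable def dxp {N : ℕ} (Δx : ℝ) (f : ZMod N → ℝ) (n : ZMod N) : ℝ :=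
  (f (n + 1) - f n) / Δx

/-- Backward difference on the periodic lattice. -/
noncomputable def dxm {N : ℕ} (Δx : ℝ) (f : ZMod N → ℝ) (n : ZMod N) : ℝ :=
  (f n - f (n - 1)) / Δx

/-- Centered difference `δ_x = (δ_x^+ + δ_x^-)/2` on the periodic lattice. -/
noncomputable def dxc {N : ℕ} (Δx : ℝ) (f : ZMod N → ℝ) (n : ZMod N) : ℝ :=
  (dxp Δx f n + dxm Δx f n) / 2

/-- Second central difference `δ̃_x²` on the periodic lattice. -/
noncomputable def d2x {N : ℕ} (Δx : ℝ) (f : ZMod N → ℝ) (n : ZMod N) : ℝ :=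
  (f (n + 1) - 2 * f n + f (n - 1)) / Δx ^ 2

namespace PeriodicGrid

variable {N : ℕ}

theorem sq_dxp_sub_sq_dxp {Δt : ℝ} (hΔt : Δt ≠ 0) (Δx : ℝ) (u U : ZMod N → ℝ) (n : ZMod N) :
    dxp Δx U n ^ 2 - dxp Δx u n ^ 2
      = 2 * Δt * (dxp Δx (fun m => (u m + U m) / 2) n * dxp Δx (fun m => (U m - u m) / Δt) n) := by
  simp only [dxp]
  field_simp
  ring

variable [NeZero N]

theorem sum_sub_shift_eq_zero (G : ZMod N → ℝ) : ∑ n : ZMod N, (G (n + 1) - G n) = 0 := by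
  rw [Finset.sum_sub_distrib, sub_eq_zero]
  exact Fintype.sum_equiv (Equiv.addRight 1) _ _ fun _ => rfl

theorem sum_mul_dxc_eq_neg (Δx : ℝ) (a b : ZMod N → ℝ) :
    ∑ n : ZMod N, a n * dxc Δx b n = -∑ n : ZMod N, b n * dxc Δx a n := by
  have h := sum_sub_shift_eq_zero fun m => (a m * b (m - 1) + b m * a (m - 1)) * (Δx⁻¹ / 2)
  rw [eq_neg_iff_add_eq_zero, ← Finset.sum_add_distrib, ← h]
  refine Finset.sum_congr rfl fun n _ => ?_
  simp only [dxc, dxp, dxm, add_sub_cancel_right]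
  ring

theorem sum_mul_dxc_self (Δx : ℝ) (a : ZMod N → ℝ) : ∑ n : ZMod N, a n * dxc Δx a n = 0 := by
  linarith [sum_mul_dxc_eq_neg Δx a a]

theorem sum_dxp_mul_dxp (Δx : ℝ) (a b : ZMod N → ℝ) :
    ∑ n : ZMod N, dxp Δx a n * dxp Δx b n = -∑ n : ZMod N, a n * d2x Δx b n := by
  have h := sum_sub_shift_eq_zero fun m => (a m * b m - a m * b (m - 1)) * (Δx ^ 2)⁻¹
  rw [eq_neg_iff_add_eq_zero, ← Finset.sum_add_distrib, ← h]
  refine Finset.sum_congr rfl fun n _ => ?_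
  simp only [dxp, d2x, add_sub_cancel_right]
  ring

theorem sum_mul_d2x_eq_zero_of_scheme {Δx ω : ℝ} {v w : ZMod N → ℝ}
    (hscheme : ∀ n : ZMod N,
      d2x Δx w n + d2x Δx v n * dxc Δx v n
        + dxc Δx (fun m => v m * d2x Δx v m) n - 2 * ω * dxc Δx v n = 0) :
    ∑ n : ZMod N, v n * d2x Δx w n = 0 := by
  have hw : ∀ n, v n * d2x Δx w n = 2 * ω * (v n * dxc Δx v n)
      - (v n * d2x Δx v n) * dxc Δx v n - v n * dxc Δx (fun m => v m * d2x Δx v m) n := by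
    intro n
    linear_combination v n * hscheme n
  simp only [hw, Finset.sum_sub_distrib, ← Finset.mul_sum, sum_mul_dxc_self, mul_zero,
    sum_mul_dxc_eq_neg Δx v (fun m => v m * d2x Δx v m)]
  ring

end PeriodicGrid

open PeriodicGrid in
theorem stmt_18_general (N : ℕ) [NeZero N] (Δx Δt ω : ℝ)
    (hΔt : 0 < Δt)
    (u U : ZMod N → ℝ)
    (hscheme : ∀ n : ZMod N,
      d2x Δx (fun m => (U m - u m) / Δt) n
        + (d2x Δx (fun m => (u m + U m) / 2) n)
            * dxc Δx (fun m => (u m + U m) / 2) n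
        + dxc Δx
            (fun m => ((u m + U m) / 2) * d2x Δx (fun k => (u k + U k) / 2) m) n
        - 2 * ω * dxc Δx (fun m => (u m + U m) / 2) n = 0) :
    (∑ n : ZMod N, Δx * (dxp Δx U n) ^ 2 / 2)
      = ∑ n : ZMod N, Δx * (dxp Δx u n) ^ 2 / 2 := by
  have hcross : ∑ n : ZMod N, dxp Δx (fun m => (u m + U m) / 2) n
      * dxp Δx (fun m => (U m - u m) / Δt) n = 0 := by
    rw [sum_dxp_mul_dxp, sum_mul_d2x_eq_zero_of_scheme hscheme, neg_zero]
  rw [← sub_eq_zero, ← Finset.sum_sub_distrib]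
  calc ∑ n : ZMod N, (Δx * dxp Δx U n ^ 2 / 2 - Δx * dxp Δx u n ^ 2 / 2)
      = ∑ n : ZMod N, Δx * Δt * (dxp Δx (fun m => (u m + U m) / 2) n
          * dxp Δx (fun m => (U m - u m) / Δt) n) := by
        refine Finset.sum_congr rfl fun n _ => ?_
        linear_combination Δx / 2 * sq_dxp_sub_sq_dxp hΔt.ne' Δx u U n
    _ = 0 := by rw [← Finset.mul_sum, hcross, mul_zero]

/-- The fully discrete `H₁`-preserving scheme for the periodic modified Hunter–Saxton
equation conserves the discrete Hamiltonian `Σ_n Δx (δ_x^+ f(n))²/2` from one time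
level (`u`) to the next (`U`). -/
theorem stmt_18 (N : ℕ) [NeZero N] (hN : 3 ≤ N) (Δx Δt ω : ℝ)
    (hΔx : 0 < Δx) (hΔt : 0 < Δt)
    (u U : ZMod N → ℝ)
    (hscheme : ∀ n : ZMod N,
      d2x Δx (fun m => (U m - u m) / Δt) n
        + (d2x Δx (fun m => (u m + U m) / 2) n)
            * dxc Δx (fun m => (u m + U m) / 2) n
        + dxc Δx
            (fun m => ((u m + U m) / 2) * d2x Δx (fun k => (u k + U k) / 2) m) n
        - 2 * ω * dxc Δx (fun m => (u m + U m) / 2) n = 0) :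
    (∑ n : ZMod N, Δx * (dxp Δx U n) ^ 2 / 2)
      = ∑ n : ZMod N, Δx * (dxp Δx u n) ^ 2 / 2 :=
  stmt_18_general N Δx Δt ω hΔt u U hscheme
end

section
/- Let N ≥ 3 be an integer, Δx, Δt > 0 and κ ∈ ℝ. Let u, U, ρ, P : ℤ/Nℤ → ℝ be grid functions on the periodic lattice; set ū = (u + U)/2, ρ̄ = (ρ + P)/2, w = (U − u)/Δt and σ = (P − ρ)/Δt. Suppose that for every n ∈ ℤ/Nℤ the scheme equations δ̃_x² w(n) + (δ̃_x² ū(n)) (δ_x ū(n)) + δ_x ( ū · δ̃_x² ū )(n) − κ ρ̄(n) δ_x ρ̄(n) = 0 and σ(n) + δ_x ( ū · ρ̄ )(n) = 0 hold, where (f · g)(m) := f(m) g(m). Then Σ_{n ∈ ℤ/Nℤ} Δx ( (δ_x^+ U(n))² + κ P(n)² ) / 2 = Σ_{n ∈ ℤ/Nℤ} Δx ( (δ_x^+ u(n))² + κ ρ(n)² ) / 2. -/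
section Aux

variable {N : ℕ} [NeZero N]

lemma sum_shift (f : ZMod N → ℝ) (c : ZMod N) :
    ∑ n : ZMod N, f (n + c) = ∑ n : ZMod N, f n :=
  Fintype.sum_equiv (Equiv.addRight c) _ _ (fun _ => rfl)

lemma sbp_d2 (Δx : ℝ) (f g : ZMod N → ℝ) :
    ∑ n : ZMod N, (f n * d2x Δx g n + dxp Δx f n * dxp Δx g n) = 0 := by
  have key : ∀ n : ZMod N, f n * d2x Δx g n + dxp Δx f n * dxp Δx g n
      = (fun k => (f k * g k - f k * g (k - 1)) / Δx ^ 2) (n + 1)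
        - (fun k => (f k * g k - f k * g (k - 1)) / Δx ^ 2) n := by
    intro n
    simp only [d2x, dxp, add_sub_cancel_right]
    ring
  rw [Finset.sum_congr rfl fun n _ => key n, Finset.sum_sub_distrib,
    sum_shift (fun k => (f k * g k - f k * g (k - 1)) / Δx ^ 2) 1, sub_self]

lemma sbp_c (Δx : ℝ) (f g : ZMod N → ℝ) :
    ∑ n : ZMod N, (f n * dxc Δx g n + g n * dxc Δx f n) = 0 := by
  have key : ∀ n : ZMod N, f n * dxc Δx g n + g n * dxc Δx f n
      = (fun k => (f (k - 1) * g k + g (k - 1) * f k) / (2 * Δx)) (n + 1)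
        - (fun k => (f (k - 1) * g k + g (k - 1) * f k) / (2 * Δx)) n := by
    intro n
    simp only [dxc, dxp, dxm, add_sub_cancel_right]
    ring
  rw [Finset.sum_congr rfl fun n _ => key n, Finset.sum_sub_distrib,
    sum_shift (fun k => (f (k - 1) * g k + g (k - 1) * f k) / (2 * Δx)) 1, sub_self]

lemma main_sum (Δx κ : ℝ) (ub rb w s : ZMod N → ℝ)
    (h1 : ∀ n : ZMod N,
      d2x Δx w n + d2x Δx ub n * dxc Δx ub n
        + dxc Δx (fun m => ub m * d2x Δx ub m) n
        - κ * rb n * dxc Δx rb n = 0)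
    (h2 : ∀ n : ZMod N,
      s n + dxc Δx (fun m => ub m * rb m) n = 0) :
    ∑ n : ZMod N, (dxp Δx w n * dxp Δx ub n + κ * (s n * rb n)) = 0 := by
  have hX1 := sbp_d2 Δx ub w
  have hX2 := sbp_c Δx ub (fun m => ub m * d2x Δx ub m)
  have hX3 := sbp_c Δx rb (fun m => ub m * rb m)
  have hpt : ∀ n : ZMod N,
      dxp Δx w n * dxp Δx ub n + κ * (s n * rb n)
        = (ub n * d2x Δx w n + dxp Δx ub n * dxp Δx w n)
          + (ub n * dxc Δx (fun m => ub m * d2x Δx ub m) n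
              + (fun m => ub m * d2x Δx ub m) n * dxc Δx ub n)
          - κ * (rb n * dxc Δx (fun m => ub m * rb m) n
              + (fun m => ub m * rb m) n * dxc Δx rb n) := by
    intro n
    have h1n := h1 n
    have h2n := h2 n
    simp only at h1n h2n ⊢
    linear_combination (-(ub n)) * h1n + (κ * rb n) * h2n
  rw [Finset.sum_congr rfl fun n _ => hpt n]
  rw [Finset.sum_sub_distrib, Finset.sum_add_distrib, hX1, hX2, ← Finset.mul_sum, hX3]
  ring

end Aux

/-- The fully discrete `H₁`-preserving scheme for the periodic two-component
Hunter–Saxton system conserves the discrete Hamiltonian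
`Σ_n Δx ((δ_x^+ f(n))² + κ g(n)²)/2` from one time level (`u`, `ρ`) to the next
(`U`, `P`). -/

theorem stmt_19 (N : ℕ) [NeZero N] (hN : 3 ≤ N) (Δx Δt κ : ℝ)
    (hΔx : 0 < Δx) (hΔt : 0 < Δt)
    (u U ρ P : ZMod N → ℝ)
    (hscheme1 : ∀ n : ZMod N,
      d2x Δx (fun m => (U m - u m) / Δt) n
        + (d2x Δx (fun m => (u m + U m) / 2) n)
            * dxc Δx (fun m => (u m + U m) / 2) n
        + dxc Δx
            (fun m => ((u m + U m) / 2) * d2x Δx (fun k => (u k + U k) / 2) m) n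
        - κ * ((ρ n + P n) / 2) * dxc Δx (fun m => (ρ m + P m) / 2) n = 0)
    (hscheme2 : ∀ n : ZMod N,
      (P n - ρ n) / Δt
        + dxc Δx (fun m => ((u m + U m) / 2) * ((ρ m + P m) / 2)) n = 0) :
    (∑ n : ZMod N, Δx * ((dxp Δx U n) ^ 2 + κ * (P n) ^ 2) / 2)
      = ∑ n : ZMod N, Δx * ((dxp Δx u n) ^ 2 + κ * (ρ n) ^ 2) / 2 := by
  rw [← sub_eq_zero, ← Finset.sum_sub_distrib]
  have hmain := main_sum Δx κ (fun m => (u m + U m) / 2) (fun m => (ρ m + P m) / 2)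
    (fun m => (U m - u m) / Δt) (fun m => (P m - ρ m) / Δt)
    (fun n => hscheme1 n) (fun n => hscheme2 n)
  have hpt : ∀ n : ZMod N,
      Δx * ((dxp Δx U n) ^ 2 + κ * (P n) ^ 2) / 2
        - Δx * ((dxp Δx u n) ^ 2 + κ * (ρ n) ^ 2) / 2
      = Δx * Δt * (dxp Δx (fun m => (U m - u m) / Δt) n
          * dxp Δx (fun m => (u m + U m) / 2) n
          + κ * (((P n - ρ n) / Δt) * ((ρ n + P n) / 2))) := by
    intro n
    simp only [dxp]
    field_simp
    ring
  rw [Finset.sum_congr rfl fun n _ => hpt n, ← Finset.mul_sum, hmain, mul_zero]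
end
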